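/- arXiv:2012.14407 — 5 statements merged into one kernel-verified Lean document; each statement's English description precedes it below -/
import Mathlib

section
/- Let P be an exponentially localized orthogonal projection on L²(ℝ^d) with kernel bound |P(x,y)| ≤ C e^{−β‖x−y‖}. Assume P admits a generalized Wannier basis {w_{γ,a}}_{γ∈𝔇, 1≤a≤m(γ)} with localization function G satisfying G(‖x‖) ≤ C₁ e^{λ‖x‖} for some C₁ > 0 and λ < 2β. Then there exists a constant K > 0, independent of γ ∈ 𝔇, such that each generalized Wannier function satisfies |w_{γ,a}(x)| ≤ K G(‖x−γ‖)^{−1/2} for all x ∈ ℝ^d, all γ ∈ 𝔇 and all 1 ≤ a ≤ m(γ). -/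
/-!
Write the continuous representative as `w(x) = ∫ p(x,y) w(y) dy`, split
`|p(x,y)| |w(y)| = (|p(x,y)| G(‖y-γ‖)^{-1/2}) (|w(y)| G(‖y-γ‖)^{1/2})` and apply Cauchy–Schwarz.
The second factor is bounded by the localization constant `M`. For the first, submultiplicativity
and exponential growth of `G` give `G(‖x-γ‖) ≤ C_G C₁ e^{λ‖x-y‖} G(‖y-γ‖)`, so
`|p(x,y)|² / G(‖y-γ‖) ≤ C² C_G C₁ e^{-(2β-λ)‖x-y‖} / G(‖x-γ‖)`, whose integral in `y` is finite
because `λ < 2β`.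
-/

open MeasureTheory Filter Topology

noncomputable section

abbrev Rd (d : ℕ) : Type := EuclideanSpace ℝ (Fin d)

abbrev Hd (d : ℕ) : Type := MeasureTheory.Lp ℂ 2 (volume : Measure (Rd d))

/-- `T` is an integral operator with kernel `k` on `L²(ℝ^d)`. -/
def HasKernelD {d : ℕ} (T : Hd d →L[ℂ] Hd d) (k : Rd d → Rd d → ℂ) : Prop :=
  ∀ f : Hd d, ∀ᵐ x : Rd d ∂volume, (T f : Rd d → ℂ) x = ∫ y : Rd d, k x y * (f : Rd d → ℂ) y

open scoped ENNReal

theorem ENNReal.ofReal_rpow_one_half (x : ℝ) :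
    ENNReal.ofReal x ^ (1 / 2 : ℝ) = ENNReal.ofReal (√x) := by
  rcases le_total 0 x with hx | hx
  · rw [ENNReal.ofReal_rpow_of_nonneg hx (by norm_num), Real.sqrt_eq_rpow]
  · rw [ENNReal.ofReal_of_nonpos hx, Real.sqrt_eq_zero'.2 hx, ENNReal.ofReal_zero,
      ENNReal.zero_rpow_of_pos (by norm_num)]

theorem ENNReal.lintegral_mul_le_weighted_L2_mul_L2 {α : Type*} [MeasurableSpace α] (μ : Measure α)
    {f g W : α → ℝ≥0∞} (hf : AEMeasurable f μ) (hg : AEMeasurable g μ) (hW : AEMeasurable W μ)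
    (hW0 : ∀ a, W a ≠ 0) (hWtop : ∀ a, W a ≠ ∞) :
    ∫⁻ a, f a * g a ∂μ ≤
      (∫⁻ a, f a ^ 2 / W a ∂μ) ^ (1 / 2 : ℝ) * (∫⁻ a, g a ^ 2 * W a ∂μ) ^ (1 / 2 : ℝ) := by
  have hsqrt_sq : ∀ a, (W a ^ (1 / 2 : ℝ)) ^ (2 : ℝ) = W a := fun a => by
    rw [← ENNReal.rpow_mul]; norm_num
  have hsplit : ∀ a, f a * g a = f a / W a ^ (1 / 2 : ℝ) * (g a * W a ^ (1 / 2 : ℝ)) := fun a => by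
    have h0 : W a ^ (1 / 2 : ℝ) ≠ 0 := fun h => hW0 a (by rw [← hsqrt_sq, h]; simp)
    have htop : W a ^ (1 / 2 : ℝ) ≠ ∞ := ENNReal.rpow_ne_top_of_nonneg (by norm_num) (hWtop a)
    rw [← mul_assoc, mul_right_comm, ENNReal.div_mul_cancel h0 htop]
  calc ∫⁻ a, f a * g a ∂μ
      = ∫⁻ a, (f a / W a ^ (1 / 2 : ℝ)) * (g a * W a ^ (1 / 2 : ℝ)) ∂μ := by simp only [← hsplit]
    _ ≤ (∫⁻ a, (f a / W a ^ (1 / 2 : ℝ)) ^ (2 : ℝ) ∂μ) ^ (1 / 2 : ℝ) *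
          (∫⁻ a, (g a * W a ^ (1 / 2 : ℝ)) ^ (2 : ℝ) ∂μ) ^ (1 / 2 : ℝ) :=
        ENNReal.lintegral_mul_le_Lp_mul_Lq μ Real.HolderConjugate.two_two
          (hf.div (hW.pow_const _)) (hg.mul (hW.pow_const _))
    _ = _ := by
        simp only [ENNReal.div_rpow_of_nonneg _ _ zero_le_two,
          ENNReal.mul_rpow_of_nonneg _ _ zero_le_two, hsqrt_sq, ENNReal.rpow_two]

section NormedGroup

variable {E : Type*} [NormedAddCommGroup E]

theorem integrable_exp_neg_mul_norm [NormedSpace ℝ E] [FiniteDimensional ℝ E]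
    [MeasurableSpace E] [BorelSpace E] (μ : Measure E) [μ.IsAddHaarMeasure] {c : ℝ} (hc : 0 < c) :
    Integrable (fun x : E => Real.exp (-c * ‖x‖)) μ := by
  have hr : (Module.finrank ℝ E : ℝ) < Module.finrank ℝ E + 1 := lt_add_one _
  refine (Continuous.locallyIntegrable (by fun_prop)).integrable_of_isBigO_cocompact ?_
    ((integrable_one_add_norm hr).integrableAtFilter _)
  -- `exp (-c ‖x‖) = exp c * exp (-c (1 + ‖x‖))`, and `exp` decays faster than any power.
  have hdecay := ((isLittleO_exp_neg_mul_rpow_atTop hc (-(Module.finrank ℝ E + 1))).isBigO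
    |>.comp_tendsto (tendsto_atTop_add_const_left _ 1 (tendsto_norm_cocompact_atTop (E := E))))
    |>.const_mul_left (Real.exp c)
  refine hdecay.congr_left fun x => ?_
  rw [Function.comp_apply, ← Real.exp_add]
  ring_nf

theorem weight_norm_sub_le_exp_mul {G : ℝ → ℝ} {CG C₁ lam : ℝ} (hCG : 0 ≤ CG)
    (hGpos : ∀ t, 0 ≤ t → 0 < G t)
    (hGtri : ∀ x y z : E, G ‖x - y‖ ≤ CG * G ‖x - z‖ * G ‖z - y‖)
    (hGexp : ∀ x : E, G ‖x‖ ≤ C₁ * Real.exp (lam * ‖x‖)) (x y γ : E) :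
    G ‖x - γ‖ ≤ CG * C₁ * Real.exp (lam * ‖x - y‖) * G ‖y - γ‖ := by
  have hGy := (hGpos _ (norm_nonneg (y - γ))).le
  calc G ‖x - γ‖ ≤ CG * G ‖x - y‖ * G ‖y - γ‖ := hGtri x γ y
    _ ≤ CG * (C₁ * Real.exp (lam * ‖x - y‖)) * G ‖y - γ‖ := by gcongr; exact hGexp (x - y)
    _ = CG * C₁ * Real.exp (lam * ‖x - y‖) * G ‖y - γ‖ := by ring

theorem lintegral_exp_kernel_sq_div_weight_le [MeasurableSpace E] [BorelSpace E]
    (μ : Measure E) [μ.IsAddLeftInvariant] [μ.IsNegInvariant]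
    {G : ℝ → ℝ} {C β K lam : ℝ} (hC : 0 ≤ C) (hGpos : ∀ t, 0 ≤ t → 0 < G t) {x γ : E}
    (hG : ∀ y, G ‖x - γ‖ ≤ K * Real.exp (lam * ‖x - y‖) * G ‖y - γ‖) :
    ∫⁻ y, ENNReal.ofReal (C * Real.exp (-β * ‖x - y‖)) ^ 2 / ENNReal.ofReal (G ‖y - γ‖) ∂μ ≤
      ENNReal.ofReal (C ^ 2 * K / G ‖x - γ‖) *
        ∫⁻ z, ENNReal.ofReal (Real.exp (-(2 * β - lam) * ‖z‖)) ∂μ := by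
  have hGx := hGpos _ (norm_nonneg (x - γ))
  have hpt : ∀ y, (C * Real.exp (-β * ‖x - y‖)) ^ 2 / G ‖y - γ‖ ≤
      C ^ 2 * K / G ‖x - γ‖ * Real.exp (-(2 * β - lam) * ‖x - y‖) := fun y => by
    have hGy := hGpos _ (norm_nonneg (y - γ))
    have hshift : Real.exp (-lam * ‖x - y‖) / G ‖y - γ‖ ≤ K / G ‖x - γ‖ := by
      rw [div_le_div_iff₀ hGy hGx]
      calc Real.exp (-lam * ‖x - y‖) * G ‖x - γ‖
          ≤ Real.exp (-lam * ‖x - y‖) * (K * Real.exp (lam * ‖x - y‖) * G ‖y - γ‖) := by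
            gcongr; exact hG y
        _ = K * G ‖y - γ‖ := by rw [neg_mul, Real.exp_neg]; field_simp
    calc (C * Real.exp (-β * ‖x - y‖)) ^ 2 / G ‖y - γ‖
        = C ^ 2 * Real.exp (-(2 * β - lam) * ‖x - y‖) *
            (Real.exp (-lam * ‖x - y‖) / G ‖y - γ‖) := by
          rw [mul_pow, ← Real.exp_nat_mul, mul_div_assoc', mul_assoc, ← Real.exp_add]
          ring_nf
      _ ≤ C ^ 2 * Real.exp (-(2 * β - lam) * ‖x - y‖) * (K / G ‖x - γ‖) := by gcongr
      _ = C ^ 2 * K / G ‖x - γ‖ * Real.exp (-(2 * β - lam) * ‖x - y‖) := by ring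
  calc _ ≤ ∫⁻ y, ENNReal.ofReal (C ^ 2 * K / G ‖x - γ‖) *
          ENNReal.ofReal (Real.exp (-(2 * β - lam) * ‖x - y‖)) ∂μ := by
        refine lintegral_mono fun y => ?_
        rw [← ENNReal.ofReal_pow (by positivity), ← ENNReal.ofReal_div_of_pos
          (hGpos _ (norm_nonneg _)), ← ENNReal.ofReal_mul' (Real.exp_nonneg _)]
        exact ENNReal.ofReal_le_ofReal (hpt y)
    _ = _ := by
        rw [lintegral_const_mul' _ _ ENNReal.ofReal_ne_top,
          lintegral_sub_left_eq_self (fun z => ENNReal.ofReal (Real.exp (-(2 * β - lam) * ‖z‖)))]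

theorem enorm_integral_mul_le_of_exp_kernel_bound {𝕜 : Type*} [RCLike 𝕜] [MeasurableSpace E]
    [BorelSpace E] (μ : Measure E) [μ.IsAddLeftInvariant] [μ.IsNegInvariant]
    {G : ℝ → ℝ} {C β K lam : ℝ} {x γ : E} {k f : E → 𝕜} (hC : 0 ≤ C)
    (hk : ∀ y, ‖k y‖ ≤ C * Real.exp (-β * ‖x - y‖)) (hf : AEStronglyMeasurable f μ)
    (hGcont : ContinuousOn G (Set.Ici 0)) (hGpos : ∀ t, 0 ≤ t → 0 < G t)
    (hG : ∀ y, G ‖x - γ‖ ≤ K * Real.exp (lam * ‖x - y‖) * G ‖y - γ‖) :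
    ‖∫ y, k y * f y ∂μ‖ₑ ≤
      (ENNReal.ofReal (C ^ 2 * K / G ‖x - γ‖) *
          ∫⁻ z, ENNReal.ofReal (Real.exp (-(2 * β - lam) * ‖z‖)) ∂μ) ^ (1 / 2 : ℝ) *
        (∫⁻ y, ‖f y‖ₑ ^ 2 * ENNReal.ofReal (G ‖y - γ‖) ∂μ) ^ (1 / 2 : ℝ) := by
  have hW : Measurable fun y : E => ENNReal.ofReal (G ‖y - γ‖) :=
    ENNReal.measurable_ofReal.comp (hGcont.comp_continuous (by fun_prop)
      fun y => norm_nonneg (y - γ)).measurable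
  calc ‖∫ y, k y * f y ∂μ‖ₑ
      ≤ ∫⁻ y, ENNReal.ofReal (C * Real.exp (-β * ‖x - y‖)) * ‖f y‖ₑ ∂μ := by
        refine (enorm_integral_le_lintegral_enorm _).trans (lintegral_mono fun y => ?_)
        rw [enorm_mul, ← ofReal_norm]
        gcongr
        exact hk y
    _ ≤ (∫⁻ y, ENNReal.ofReal (C * Real.exp (-β * ‖x - y‖)) ^ 2 /
            ENNReal.ofReal (G ‖y - γ‖) ∂μ) ^ (1 / 2 : ℝ) *
          (∫⁻ y, ‖f y‖ₑ ^ 2 * ENNReal.ofReal (G ‖y - γ‖) ∂μ) ^ (1 / 2 : ℝ) :=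
        ENNReal.lintegral_mul_le_weighted_L2_mul_L2 μ (by fun_prop) hf.enorm hW.aemeasurable
          (fun y => (ENNReal.ofReal_pos.2 (hGpos _ (norm_nonneg _))).ne')
          fun _ => ENNReal.ofReal_ne_top
    _ ≤ _ := by gcongr; exact lintegral_exp_kernel_sq_div_weight_le μ hC hGpos hG

end NormedGroup

theorem statement_4_general (d : ℕ)
    (p : Rd d → Rd d → ℂ) (C β : ℝ)
    (hC : 0 < C)
    (hpbd : ∀ x y : Rd d, ‖p x y‖ ≤ C * Real.exp (-β * ‖x - y‖))
    -- `G` is a localization function: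
    (G : ℝ → ℝ) (hGcont : ContinuousOn G (Set.Ici 0)) (hGpos : ∀ t : ℝ, 0 ≤ t → 0 < G t)
    (CG : ℝ) (hCG : 0 < CG)
    (hGtri : ∀ x y z : Rd d, G ‖x - y‖ ≤ CG * G ‖x - z‖ * G ‖z - y‖)
    -- growth bound on `G`:
    (C₁ lam : ℝ) (hC₁ : 0 < C₁) (hlam : lam < 2 * β)
    (hGexp : ∀ x : Rd d, G ‖x‖ ≤ C₁ * Real.exp (lam * ‖x‖))
    -- the generalized Wannier basis:
    (𝔇 : Set (Rd d)) (m : Rd d → ℕ)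
    (w : (γ : Rd d) → Fin (m γ) → Hd d)
    (M : ℝ)
    (hloc : ∀ γ ∈ 𝔇, ∀ a, ∫⁻ x : Rd d,
        (‖(w γ a : Rd d → ℂ) x‖₊ : ENNReal) ^ 2 * ENNReal.ofReal (G ‖x - γ‖)
        ≤ ENNReal.ofReal M) :
    ∃ K : ℝ, 0 < K ∧ ∀ γ ∈ 𝔇, ∀ a, ∀ x : Rd d,
      ‖∫ y : Rd d, p x y * (w γ a : Rd d → ℂ) y‖
        ≤ K * (G ‖x - γ‖) ^ (-(1 : ℝ) / 2) := by
  set I := ∫⁻ z : Rd d, ENNReal.ofReal (Real.exp (-(2 * β - lam) * ‖z‖))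
  have hI : I ≠ ∞ := (integrable_exp_neg_mul_norm volume (sub_pos.2 hlam)).lintegral_lt_top.ne
  set A := C ^ 2 * (CG * C₁)
  refine ⟨√(A * I.toReal * M) + 1, by positivity, fun γ hγ a x => ?_⟩
  have hGx := hGpos _ (norm_nonneg (x - γ))
  have hbound : ‖∫ y, p x y * (w γ a : Rd d → ℂ) y‖ₑ ≤
      ENNReal.ofReal (√(A / G ‖x - γ‖ * I.toReal) * √M) := by
    calc _ ≤ _ := enorm_integral_mul_le_of_exp_kernel_bound volume hC.le (hpbd x)
          (Lp.aestronglyMeasurable _) hGcont hGpos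
          (weight_norm_sub_le_exp_mul hCG.le hGpos hGtri hGexp x · γ)
      _ ≤ (ENNReal.ofReal (A / G ‖x - γ‖) * I) ^ (1 / 2 : ℝ) * ENNReal.ofReal M ^ (1 / 2 : ℝ) := by
          gcongr; exact hloc γ hγ a
      _ = _ := by
          rw [← ENNReal.ofReal_toReal hI, ← ENNReal.ofReal_mul (by positivity),
            ENNReal.ofReal_rpow_one_half, ENNReal.ofReal_rpow_one_half,
            ENNReal.toReal_ofReal (by positivity), ← ENNReal.ofReal_mul (Real.sqrt_nonneg _)]
  rw [← ofReal_norm, ENNReal.ofReal_le_ofReal_iff (by positivity)] at hbound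
  refine hbound.trans ?_
  rw [← Real.sqrt_mul (by positivity), div_mul_eq_mul_div, div_mul_eq_mul_div,
    Real.sqrt_div' _ hGx.le, div_eq_mul_inv, neg_div, Real.rpow_neg hGx.le, ← Real.sqrt_eq_rpow]
  gcongr
  exact le_add_of_nonneg_right zero_le_one

/-- L∞ bound on generalized Wannier functions. If `P` is an exponentially
localized orthogonal projection on `L²(ℝ^d)` admitting a GWB with localization function `G`
satisfying `G(‖x‖) ≤ C₁ e^{λ‖x‖}` with `λ < 2β`, then there is `K > 0`, independent of `γ`,
with `|w_{γ,a}(x)| ≤ K G(‖x-γ‖)^{-1/2}` for the continuous representative `x ↦ ∫ p(x,y) w(y) dy`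
of each generalized Wannier function. -/
theorem statement_4 (d : ℕ)
    (P : Hd d →L[ℂ] Hd d) (hPsa : IsSelfAdjoint P) (hPproj : P ∘L P = P)
    (p : Rd d → Rd d → ℂ) (C β : ℝ)
    (hpcont : Continuous fun q : Rd d × Rd d => p q.1 q.2)
    (hC : 0 < C) (hβ : 0 < β)
    (hpbd : ∀ x y : Rd d, ‖p x y‖ ≤ C * Real.exp (-β * ‖x - y‖))
    (hker : HasKernelD P p)
    -- `G` is a localization function:
    (G : ℝ → ℝ) (hGcont : ContinuousOn G (Set.Ici 0)) (hGpos : ∀ t : ℝ, 0 ≤ t → 0 < G t)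
    (hGinfty : Filter.Tendsto G Filter.atTop Filter.atTop)
    (CG : ℝ) (hCG : 0 < CG)
    (hGtri : ∀ x y z : Rd d, G ‖x - y‖ ≤ CG * G ‖x - z‖ * G ‖z - y‖)
    -- growth bound on `G`:
    (C₁ lam : ℝ) (hC₁ : 0 < C₁) (hlam : lam < 2 * β)
    (hGexp : ∀ x : Rd d, G ‖x‖ ≤ C₁ * Real.exp (lam * ‖x‖))
    -- the generalized Wannier basis:
    (𝔇 : Set (Rd d)) (m : Rd d → ℕ) (mStar : ℕ) (hm : ∀ γ ∈ 𝔇, m γ ≤ mStar)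
    (w : (γ : Rd d) → Fin (m γ) → Hd d)
    (horth : Orthonormal ℂ (fun σ : Σ γ : 𝔇, Fin (m (γ : Rd d)) => w (σ.1 : Rd d) σ.2))
    (hran : ∀ γ ∈ 𝔇, ∀ a, P (w γ a) = w γ a)
    (hbasis : ∀ f : Hd d, P f = f →
      (∀ γ ∈ 𝔇, ∀ a, (inner ℂ (w γ a) f : ℂ) = 0) → f = 0)
    (M : ℝ)
    (hloc : ∀ γ ∈ 𝔇, ∀ a, ∫⁻ x : Rd d,
        (‖(w γ a : Rd d → ℂ) x‖₊ : ENNReal) ^ 2 * ENNReal.ofReal (G ‖x - γ‖)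
        ≤ ENNReal.ofReal M) :
    ∃ K : ℝ, 0 < K ∧ ∀ γ ∈ 𝔇, ∀ a, ∀ x : Rd d,
      ‖∫ y : Rd d, p x y * (w γ a : Rd d → ℂ) y‖
        ≤ K * (G ‖x - γ‖) ^ (-(1 : ℝ) / 2) :=
  statement_4_general d p C β hC hpbd G hGcont hGpos CG hCG hGtri C₁ lam hC₁ hlam hGexp 𝔇 m w M hloc
end
end

section
/- Let 𝔇 ⊂ ℝ² be an r-uniformly discrete set and let D : ℝ² → ℝ be a continuous function such that |D(x)| ≥ |D(y)| whenever ‖x‖ ≤ ‖y‖. Then there exists a constant K (depending on r, 𝔇 and D, but independent of L) such that for every L > 2r: ∑_{γ ∈ 𝔇 ∩ Λ_L} |D(γ)| ≤ K ∫_{Λ_L} |D(x)| dx, where Λ_L = [−L,L]². -/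
open MeasureTheory Filter Topology

noncomputable section

abbrev R2 : Type := EuclideanSpace ℝ (Fin 2)

abbrev H2 : Type := MeasureTheory.Lp ℂ 2 (volume : Measure R2)

/-- `T` is an integral operator with kernel `k`. -/
def HasKernel (T : H2 →L[ℂ] H2) (k : R2 → R2 → ℂ) : Prop :=
  ∀ f : H2, ∀ᵐ x : R2 ∂volume, (T f : R2 → ℂ) x = ∫ y : R2, k x y * (f : R2 → ℂ) y

/-- `P` is an orthogonal projection. -/
def IsOrthProj (P : H2 →L[ℂ] H2) : Prop := IsSelfAdjoint P ∧ P ∘L P = P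

/-- `p` is a jointly continuous, exponentially localized kernel with constants `C`, `β`. -/
def IsExpLocKernel (p : R2 → R2 → ℂ) (C β : ℝ) : Prop :=
  Continuous (fun q : R2 × R2 => p q.1 q.2) ∧ 0 < C ∧ 0 < β ∧
    ∀ x y : R2, ‖p x y‖ ≤ C * Real.exp (-β * ‖x - y‖)

/-- Hilbert-Schmidt operators on `L²(ℝ²)`. -/
def IsHilbertSchmidt (T : H2 →L[ℂ] H2) : Prop :=
  ∃ (w : Set H2) (b : HilbertBasis w ℂ H2), Summable fun i => ‖T (b i)‖ ^ 2

/-- Trace class operators, characterized as products of two Hilbert-Schmidt operators. -/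
def IsTraceClass (T : H2 →L[ℂ] H2) : Prop :=
  ∃ A B : H2 →L[ℂ] H2, IsHilbertSchmidt A ∧ IsHilbertSchmidt B ∧ T = A ∘L B

def traceBasisIdx : Set H2 := (exists_hilbertBasis ℂ H2).choose

def traceBasis : HilbertBasis traceBasisIdx ℂ H2 := (exists_hilbertBasis ℂ H2).choose_spec.choose

/-- The trace of an operator, computed in a fixed Hilbert basis of `L²(ℝ²)`.
For trace class operators this is the canonical trace for any choice of basis. -/
def opTrace (T : H2 →L[ℂ] H2) : ℂ :=
  ∑' i : traceBasisIdx, (inner ℂ (traceBasis i) (T (traceBasis i)) : ℂ)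

/-- The square `Λ_L = [-L, L]²` in `ℝ²`. -/
def Lam (L : ℝ) : Set R2 := {x : R2 | |x 0| ≤ L ∧ |x 1| ≤ L}

/-- The characteristic function of `Λ_L`, with values in `ℂ`. -/
def indL (L : ℝ) (x : R2) : ℂ := (Lam L).indicator (fun _ => (1 : ℂ)) x

/-- Formal composition of two integral kernels. -/
def kComp (k₁ k₂ : R2 → R2 → ℂ) : R2 → R2 → ℂ := fun x y => ∫ z : R2, k₁ x z * k₂ z y

/-- The kernel of the commutator `[X_i, P]`, when `P` has kernel `p`. -/
def commK (p : R2 → R2 → ℂ) (i : Fin 2) : R2 → R2 → ℂ :=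
  fun x y => ((x i - y i : ℝ) : ℂ) * p x y

/-- The kernel of the double commutator `[[X₁,P],[X₂,P]]`, when `P` has kernel `p`. -/
def dcommK (p : R2 → R2 → ℂ) : R2 → R2 → ℂ :=
  fun x y => kComp (commK p 0) (commK p 1) x y - kComp (commK p 1) (commK p 0) x y

/-- The kernel of `i χ_{Λ_L} P [[X₁,P],[X₂,P]] P χ_{Λ_L}`, when `P` has kernel `p`. -/
def chernK (p : R2 → R2 → ℂ) (L : ℝ) : R2 → R2 → ℂ :=
  fun x y => indL L x * (Complex.I * kComp p (kComp (dcommK p) p) x y) * indL L y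

/-- A set `𝔇 ⊆ ℝ²` is `r`-uniformly discrete. -/
def UnifDiscrete (𝔇 : Set R2) (r : ℝ) : Prop :=
  0 < r ∧ ∀ x : R2, (𝔇 ∩ Metric.ball x r).Subsingleton

/-- The index set of a generalized Wannier basis. -/
abbrev WIdx (𝔇 : Set R2) (m : R2 → ℕ) : Type := Σ γ : 𝔇, Fin (m (γ : R2))

/-- `w` is a generalized Wannier basis for `P`, `G`-localized around `𝔇`
with localization constant `M` and uniform multiplicity bound `mStar`. -/
def IsGWB (P : H2 →L[ℂ] H2) (𝔇 : Set R2) (m : R2 → ℕ) (mStar : ℕ)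
    (w : (γ : R2) → Fin (m γ) → H2) (G : ℝ → ℝ) (M : ℝ) : Prop :=
  (∀ γ ∈ 𝔇, m γ ≤ mStar) ∧
  Orthonormal ℂ (fun σ : WIdx 𝔇 m => w (σ.1 : R2) σ.2) ∧
  (∀ γ ∈ 𝔇, ∀ a, P (w γ a) = w γ a) ∧
  (∀ f : H2, P f = f → (∀ (γ : R2), γ ∈ 𝔇 → ∀ a, (inner ℂ (w γ a) f : ℂ) = 0) → f = 0) ∧
  (∀ γ ∈ 𝔇, ∀ a, ∫⁻ x : R2,
      (‖(w γ a : R2 → ℂ) x‖₊ : ENNReal) ^ 2 * ENNReal.ofReal (G ‖x - γ‖)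
      ≤ ENNReal.ofReal M)

/-- The Japanese bracket `⟨x⟩ = (1+‖x‖²)^{1/2}` on `ℝ²`. -/
def jap (x : R2) : ℝ := Real.sqrt (1 + ‖x‖ ^ 2)

/-- The Japanese bracket `⟨t⟩ = (1+t²)^{1/2}` on `ℝ`. -/
def japR (t : ℝ) : ℝ := Real.sqrt (1 + t ^ 2)


/-!
A point `γ ∈ 𝔇 ∩ Λ_L` with `‖γ‖ ≥ r/3` owns a ball of radius `r/6`, centred on the segment
from `γ` towards the origin, that lies in `Λ_L`, in `B(γ, r/2)` and in the disc of radius `‖γ‖`.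
On it `|D| ≥ |D γ|`, and uniform discreteness makes these balls disjoint, so
`∑ |D γ| · |B_{r/6}| ≤ ∫_{Λ_L} |D|`. At most one point of `𝔇` lies within `r` of the origin;
its term is at most `|D 0|`, which is controlled by `∫_{B(0,r)} |D| ≤ ∫_{Λ_L} |D|`, positive
by continuity unless `D 0 = 0`.
-/

open Metric

theorem Continuous.setIntegral_pos_of_isOpen {X : Type*} [TopologicalSpace X]
    [MeasurableSpace X] [OpensMeasurableSpace X] {μ : Measure X} [μ.IsOpenPosMeasure] {f : X → ℝ}
    {U : Set X} {x : X} (hf : Continuous f) (hf0 : 0 ≤ f) (hU : IsOpen U) (hxU : x ∈ U)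
    (hfx : f x ≠ 0) (hfi : IntegrableOn f U μ) : 0 < ∫ y in U, f y ∂μ :=
  (setIntegral_pos_iff_support_of_nonneg_ae (ae_of_all _ hf0) hfi).2
    ((hf.isOpen_support.inter hU).measure_pos μ ⟨x, hfx, hxU⟩)

theorem sum_setIntegral_le_setIntegral_of_pairwiseDisjoint {X ι : Type*} [MeasurableSpace X]
    {μ : Measure X} {f : X → ℝ} {S : Set X} (hf : IntegrableOn f S μ) (hf0 : 0 ≤ᵐ[μ.restrict S] f)
    {F : Finset ι} {B : ι → Set X} (hB : ∀ i ∈ F, MeasurableSet (B i)) (hBS : ∀ i ∈ F, B i ⊆ S)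
    (hdisj : (F : Set ι).PairwiseDisjoint B) :
    ∑ i ∈ F, ∫ x in B i, f x ∂μ ≤ ∫ x in S, f x ∂μ := by
  rw [← integral_biUnion_finset F hB hdisj fun i hi => hf.mono_set (hBS i hi)]
  exact setIntegral_mono_set hf hf0 (Set.iUnion₂_subset hBS).eventuallyLE

theorem norm_le_of_mem_Lam {x : R2} {L : ℝ} (hx : x ∈ Lam L) : ‖x‖ ≤ 2 * L := by
  have h0 : 0 ≤ L := (abs_nonneg _).trans hx.1
  have hsq : ‖x‖ ^ 2 ≤ (2 * L) ^ 2 := by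
    rw [EuclideanSpace.real_norm_sq_eq, Fin.sum_univ_two]
    nlinarith [sq_abs (x 0), sq_abs (x 1), abs_nonneg (x 0), abs_nonneg (x 1), hx.1, hx.2]
  exact abs_le_of_sq_le_sq' hsq (by positivity) |>.2

theorem ball_subset_Lam {c : R2} {s L : ℝ} (h : ∀ i, |c i| + s ≤ L) : ball c s ⊆ Lam L := by
  have hcoord : ∀ x ∈ ball c s, ∀ i, |x i| ≤ L := fun x hx i => by
    have hxi : |x i - c i| ≤ ‖x - c‖ := by simpa using PiLp.norm_apply_le (x - c) i
    have := abs_sub_abs_le_abs_sub (x i) (c i)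
    linarith [h i, mem_ball_iff_norm.1 hx]
  exact fun x hx => ⟨hcoord x hx 0, hcoord x hx 1⟩

theorem isCompact_Lam (L : ℝ) : IsCompact (Lam L) := by
  refine isCompact_of_isClosed_isBounded ?_ (isBounded_closedBall (x := 0) (r := 2 * L) |>.subset
    fun x hx => mem_closedBall_zero_iff.2 (norm_le_of_mem_Lam hx))
  show IsClosed ({x : R2 | |x 0| ≤ L} ∩ {x | |x 1| ≤ L})
  exact (isClosed_le (by fun_prop) continuous_const).inter
    (isClosed_le (by fun_prop) continuous_const)

theorem exists_ball_subset_Lam_of_le_norm {γ : R2} {s L : ℝ} (hs : 0 < s) (hγ : γ ∈ Lam L)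
    (hγs : 2 * s ≤ ‖γ‖) :
    ∃ c, ball c s ⊆ Lam L ∧ ball c s ⊆ closedBall 0 ‖γ‖ ∧ ball c s ⊆ ball γ (3 * s) := by
  have hγ0 : 0 < ‖γ‖ := by linarith
  set t := 2 * s / ‖γ‖
  have ht : t * ‖γ‖ = 2 * s := div_mul_cancel₀ _ hγ0.ne'
  have ht1 : 0 ≤ 1 - t := by rw [sub_nonneg, div_le_one hγ0]; exact hγs
  -- pulling `γ` by `2s` towards the origin shrinks each coordinate by `t |γ i|`, and `s ≤ t L`
  -- because `‖γ‖ ≤ 2L`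
  have htL : s ≤ t * L := by
    rw [div_mul_eq_mul_div, le_div_iff₀ hγ0]; nlinarith [norm_le_of_mem_Lam hγ]
  have hcγ : ‖(1 - t) • γ - γ‖ = 2 * s := by
    rw [show (1 - t) • γ - γ = -(t • γ) by module, norm_neg, norm_smul, Real.norm_eq_abs,
      abs_of_nonneg (by positivity), ht]
  have hc : ‖(1 - t) • γ‖ = ‖γ‖ - 2 * s := by
    rw [norm_smul, Real.norm_eq_abs, abs_of_nonneg ht1, sub_mul, one_mul, ht]
  refine ⟨(1 - t) • γ, ball_subset_Lam fun i => ?_, ?_, ball_subset_ball' ?_⟩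
  · have hγi : |γ i| ≤ L := by fin_cases i; exacts [hγ.1, hγ.2]
    rw [PiLp.smul_apply, smul_eq_mul, abs_mul, abs_of_nonneg ht1]
    nlinarith
  · refine ball_subset_closedBall.trans (closedBall_subset_closedBall' ?_)
    rw [dist_zero_right, hc]; linarith
  · rw [dist_eq_norm, hcγ]; linarith

theorem UnifDiscrete.pairwiseDisjoint_ball {𝔇 : Set R2} {r : ℝ} (h : UnifDiscrete 𝔇 r) :
    𝔇.PairwiseDisjoint fun γ => ball γ (r / 2) := by
  intro γ hγ γ' hγ' hne
  refine ball_disjoint_ball (le_of_not_gt fun hlt => hne ?_)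
  exact h.2 γ ⟨hγ, mem_ball_self h.1⟩ ⟨hγ', mem_ball.2 (by rw [dist_comm]; linarith)⟩

theorem sum_abs_le_abs_apply_zero {𝔇 : Set R2} {r : ℝ} (h𝔇 : UnifDiscrete 𝔇 r) {D : R2 → ℝ}
    (hmono : ∀ x y : R2, ‖x‖ ≤ ‖y‖ → |D y| ≤ |D x|) {F : Finset R2} (hF : ↑F ⊆ 𝔇 ∩ ball 0 r) :
    ∑ γ ∈ F, |D γ| ≤ |D 0| := by
  have hcard : F.card ≤ 1 :=
    Finset.card_le_one_iff_subsingleton_coe.2 (((h𝔇.2 0).anti hF).coe_sort)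
  calc ∑ γ ∈ F, |D γ| ≤ F.card • |D 0| :=
        Finset.sum_le_card_nsmul F _ _ fun γ _ => hmono 0 γ (by simp)
    _ ≤ 1 • |D 0| := nsmul_le_nsmul_left (abs_nonneg _) hcard
    _ = |D 0| := one_nsmul _

theorem sum_abs_mul_volume_le_setIntegral {𝔇 : Set R2} {r L : ℝ} (h𝔇 : UnifDiscrete 𝔇 r)
    {D : R2 → ℝ} (hmono : ∀ x y : R2, ‖x‖ ≤ ‖y‖ → |D y| ≤ |D x|)
    (hD : IntegrableOn (fun x => |D x|) (Lam L)) {F : Finset R2} (hF : ↑F ⊆ 𝔇 ∩ Lam L)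
    (hfar : ∀ γ ∈ F, r / 3 ≤ ‖γ‖) :
    (∑ γ ∈ F, |D γ|) * volume.real (ball (0 : R2) (r / 6)) ≤ ∫ x in Lam L, |D x| := by
  have hs : 0 < r / 6 := by linarith [h𝔇.1]
  have hc : ∀ γ ∈ F, ∃ c, ball c (r / 6) ⊆ Lam L ∧ ball c (r / 6) ⊆ closedBall 0 ‖γ‖ ∧
      ball c (r / 6) ⊆ ball γ (r / 2) := fun γ hγ => by
    simpa [show 3 * (r / 6) = r / 2 by ring] using
      exists_ball_subset_Lam_of_le_norm hs (hF hγ).2 (by linarith [hfar γ hγ])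
  choose! c hcL hc0 hcγ using hc
  have hball : ∀ γ ∈ F, |D γ| * volume.real (ball (0 : R2) (r / 6)) ≤
      ∫ x in ball (c γ) (r / 6), |D x| := fun γ hγ => by
    rw [measureReal_def, ← Measure.addHaar_ball_center volume (c γ), ← measureReal_def]
    refine setIntegral_ge_of_const_le_real measurableSet_ball measure_ball_lt_top.ne
      (fun x hx => hmono x γ ?_) (hD.mono_set (hcL γ hγ))
    simpa using hc0 γ hγ hx
  have hdisj : (F : Set R2).PairwiseDisjoint fun γ => ball (c γ) (r / 6) :=
    (h𝔇.pairwiseDisjoint_ball.subset fun γ hγ => (hF hγ).1).mono_on hcγ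
  calc (∑ γ ∈ F, |D γ|) * volume.real (ball (0 : R2) (r / 6))
      = ∑ γ ∈ F, |D γ| * volume.real (ball (0 : R2) (r / 6)) := Finset.sum_mul ..
    _ ≤ ∑ γ ∈ F, ∫ x in ball (c γ) (r / 6), |D x| := Finset.sum_le_sum hball
    _ ≤ ∫ x in Lam L, |D x| :=
      sum_setIntegral_le_setIntegral_of_pairwiseDisjoint hD (ae_of_all _ fun x => abs_nonneg _)
        (fun _ _ => measurableSet_ball) hcL hdisj

theorem exists_abs_apply_zero_le_mul_setIntegral {D : R2 → ℝ} (hD : Continuous D) {r : ℝ}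
    (hr : 0 < r) : ∃ K₀ : ℝ, 0 < K₀ ∧ ∀ L, r ≤ L → |D 0| ≤ K₀ * ∫ x in Lam L, |D x| := by
  have hLam : ∀ L, r ≤ L → ∫ x in ball 0 r, |D x| ≤ ∫ x in Lam L, |D x| := fun L hL =>
    setIntegral_mono_set (hD.abs.continuousOn.integrableOn_compact (isCompact_Lam L))
      (ae_of_all _ fun x => abs_nonneg _) (ball_subset_Lam fun i => by simpa using hL).eventuallyLE
  by_cases h0 : D 0 = 0
  · exact ⟨1, one_pos, fun L _ => by
      simpa [h0] using
        setIntegral_nonneg (isCompact_Lam L).measurableSet fun x _ => abs_nonneg (D x)⟩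
  have hpos : 0 < ∫ x in ball 0 r, |D x| :=
    hD.abs.setIntegral_pos_of_isOpen (fun x => abs_nonneg (D x)) isOpen_ball
      (mem_ball_self hr) (abs_ne_zero.2 h0)
      ((hD.abs.continuousOn.integrableOn_compact (isCompact_closedBall 0 r)).mono_set
        ball_subset_closedBall)
  refine ⟨|D 0| / ∫ x in ball 0 r, |D x|, by positivity, fun L hL => ?_⟩
  calc |D 0| = |D 0| / (∫ x in ball 0 r, |D x|) * ∫ x in ball 0 r, |D x| :=
        (div_mul_cancel₀ _ hpos.ne').symm
    _ ≤ _ := mul_le_mul_of_nonneg_left (hLam L hL) (by positivity)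

/-- generalized Maclaurin–Cauchy test. For an `r`-uniformly discrete set `𝔇 ⊆ ℝ²`
and a continuous, radially monotone function `D`, there is a constant `K`, independent of `L`,
such that for all `L > 2r` the sum of `|D(γ)|` over `γ ∈ 𝔇 ∩ Λ_L` is bounded by
`K ∫_{Λ_L} |D(x)| dx`. -/
theorem statement_5
    (𝔇 : Set R2) (r : ℝ) (h𝔇 : UnifDiscrete 𝔇 r)
    (D : R2 → ℝ) (hD : Continuous D)
    (hmono : ∀ x y : R2, ‖x‖ ≤ ‖y‖ → |D y| ≤ |D x|) :
    ∃ K : ℝ, 0 < K ∧ ∀ L : ℝ, 2 * r < L →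
      ∀ F : Finset R2, (↑F ⊆ 𝔇 ∩ Lam L) →
        ∑ γ ∈ F, |D γ| ≤ K * ∫ x in Lam L, |D x| := by
  obtain ⟨K₀, hK₀, hzero⟩ := exists_abs_apply_zero_le_mul_setIntegral hD h𝔇.1
  set V := volume.real (ball (0 : R2) (r / 6))
  have hV : 0 < V := ENNReal.toReal_pos (measure_ball_pos volume 0 (by linarith [h𝔇.1])).ne'
    measure_ball_lt_top.ne
  refine ⟨V⁻¹ + K₀, by positivity, fun L hL F hF => ?_⟩
  have hfar := sum_abs_mul_volume_le_setIntegral h𝔇 hmono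
    (hD.abs.continuousOn.integrableOn_compact (isCompact_Lam L))
    (F := F.filter (r / 3 ≤ ‖·‖)) (fun γ hγ => hF (Finset.mem_filter.1 hγ).1)
    (fun γ hγ => (Finset.mem_filter.1 hγ).2)
  have hnear := sum_abs_le_abs_apply_zero h𝔇 hmono (F := F.filter (¬ r / 3 ≤ ‖·‖))
    fun γ hγ => by
      obtain ⟨hγF, hγr⟩ := Finset.mem_filter.1 hγ
      exact ⟨(hF hγF).1, mem_ball_zero_iff.2 (by linarith [h𝔇.1])⟩
  rw [← Finset.sum_filter_add_sum_filter_not F (r / 3 ≤ ‖·‖), add_mul, inv_mul_eq_div]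
  exact add_le_add ((le_div_iff₀ hV).2 hfar) (hnear.trans (hzero L (by linarith [h𝔇.1])))

end
end

section
/- Let 𝔇 ⊂ ℝ² be an r-uniformly discrete set, fix i ∈ {1,2}, and let D : ℝ² → ℝ be a continuous function such that |D(x)| ≥ |D(y)| whenever |x_i| ≤ |y_i|. Then there exists a constant K (depending on r, 𝔇 and D, but independent of L) such that for every L > 2r: ∑_{γ ∈ 𝔇 ∩ Λ_L} |D(γ)| ≤ K ∫_{Λ_L} |D(x)| dx, where Λ_L = [−L,L]². -/
open MeasureTheory Filter Topology

noncomputable section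

/-!
Give each point `γ` of the separated set the box of side `t` that has `γ` as a corner and lies on
the side of `γ` facing the origin in every coordinate. For `t` small compared with `r` these boxes
are pairwise disjoint, and they stay inside `[-L, L]ⁿ`. If `|γ i| ≥ t`, every `x` in the box has
`|x i| ≤ |γ i|`, so `|D x| ≥ |D γ|`; if `|γ i| < t`, the box lies in the slab `|x i| ≤ t`, where
continuity at `0` gives `|D x| ≥ |D 0| / 2 ≥ |D γ| / 2` once `t` is small. Thus
`tⁿ |D γ| ≤ 2 ∫_box |D|`, and summing over the disjoint boxes gives `K = 2 / tⁿ`.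
-/

open Set Function

def towardZeroIcc (t a : ℝ) : Set ℝ := if 0 ≤ a then Icc (a - t) a else Icc a (a + t)

theorem measurableSet_towardZeroIcc (t a : ℝ) : MeasurableSet (towardZeroIcc t a) := by
  unfold towardZeroIcc; split_ifs <;> exact measurableSet_Icc

theorem volume_towardZeroIcc (t a : ℝ) : volume (towardZeroIcc t a) = ENNReal.ofReal t := by
  unfold towardZeroIcc; split_ifs <;> simp [Real.volume_Icc]

theorem abs_sub_le_of_mem_towardZeroIcc {t a x : ℝ} (hx : x ∈ towardZeroIcc t a) :
    |x - a| ≤ t := by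
  unfold towardZeroIcc at hx
  split_ifs at hx <;> obtain ⟨h₁, h₂⟩ := hx <;>
    exact abs_le.2 ⟨by linarith, by linarith⟩

theorem abs_le_max_of_mem_towardZeroIcc {t a x : ℝ} (hx : x ∈ towardZeroIcc t a) :
    |x| ≤ max |a| t := by
  unfold towardZeroIcc at hx
  split_ifs at hx with ha <;> obtain ⟨h₁, h₂⟩ := hx
  · rw [abs_of_nonneg ha]
    exact abs_le.2 ⟨by linarith [le_max_right a t], le_max_of_le_left h₂⟩
  · rw [abs_of_neg (not_le.1 ha)]
    exact abs_le.2 ⟨by linarith [le_max_left (-a) t], by linarith [le_max_right (-a) t]⟩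

variable {ι : Type*}

section Boxes

theorem EuclideanSpace.setOf_forall_apply_mem_eq_preimage (S : ι → Set ℝ) :
    {x : EuclideanSpace ℝ ι | ∀ k, x k ∈ S k} =
      (MeasurableEquiv.toLp 2 (ι → ℝ)).symm ⁻¹' univ.pi S := by
  ext; simp

def cube (L : ℝ) : Set (EuclideanSpace ℝ ι) := {x | ∀ k, x k ∈ Icc (-L) L}

def towardZeroBox (t : ℝ) (γ : EuclideanSpace ℝ ι) : Set (EuclideanSpace ℝ ι) :=
  {x | ∀ k, x k ∈ towardZeroIcc t (γ k)}

theorem towardZeroBox_subset_cube {t L : ℝ} {γ : EuclideanSpace ℝ ι} (hγ : γ ∈ cube L)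
    (htL : t ≤ L) : towardZeroBox t γ ⊆ cube L := fun _ hx k =>
  abs_le.1 <| (abs_le_max_of_mem_towardZeroIcc (hx k)).trans (max_le (abs_le.2 (hγ k)) htL)

variable [Fintype ι]

theorem EuclideanSpace.measurableSet_setOf_forall_apply_mem {S : ι → Set ℝ}
    (hS : ∀ k, MeasurableSet (S k)) :
    MeasurableSet {x : EuclideanSpace ℝ ι | ∀ k, x k ∈ S k} := by
  rw [setOf_forall_apply_mem_eq_preimage]
  exact (MeasurableSet.univ_pi hS).preimage (MeasurableEquiv.measurable _)

theorem EuclideanSpace.volume_setOf_forall_apply_mem (S : ι → Set ℝ) :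
    volume {x : EuclideanSpace ℝ ι | ∀ k, x k ∈ S k} = ∏ k, volume (S k) := by
  rw [setOf_forall_apply_mem_eq_preimage,
    (EuclideanSpace.volume_preserving_symm_measurableEquiv_toLp ι).measure_preimage_equiv,
    volume_pi_pi]

theorem volume_cube_ne_top (L : ℝ) : volume (cube (ι := ι) L) ≠ ⊤ := by
  rw [cube, EuclideanSpace.volume_setOf_forall_apply_mem]
  simp [Real.volume_Icc]

theorem measurableSet_towardZeroBox (t : ℝ) (γ : EuclideanSpace ℝ ι) :
    MeasurableSet (towardZeroBox t γ) :=
  EuclideanSpace.measurableSet_setOf_forall_apply_mem fun _ => measurableSet_towardZeroIcc _ _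

theorem volume_towardZeroBox (t : ℝ) (γ : EuclideanSpace ℝ ι) :
    volume (towardZeroBox t γ) = ENNReal.ofReal t ^ Fintype.card ι := by
  simp [towardZeroBox, EuclideanSpace.volume_setOf_forall_apply_mem, volume_towardZeroIcc]

theorem volume_towardZeroBox_ne_top (t : ℝ) (γ : EuclideanSpace ℝ ι) :
    volume (towardZeroBox t γ) ≠ ⊤ := by
  simp [volume_towardZeroBox]

theorem disjoint_towardZeroBox {t : ℝ} {γ γ' : EuclideanSpace ℝ ι}
    (ht : Fintype.card ι * (2 * t) ^ 2 < dist γ γ' ^ 2) :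
    Disjoint (towardZeroBox t γ) (towardZeroBox t γ') := by
  refine Set.disjoint_left.2 fun x hx hx' => ht.not_ge ?_
  calc dist γ γ' ^ 2 = ∑ k, dist (γ k) (γ' k) ^ 2 := EuclideanSpace.dist_sq_eq γ γ'
    _ ≤ ∑ _k : ι, (2 * t) ^ 2 := Finset.sum_le_sum fun k _ => by
        have h₁ := abs_sub_le_of_mem_towardZeroIcc (hx k)
        have h₂ := abs_sub_le_of_mem_towardZeroIcc (hx' k)
        rw [Real.dist_eq]
        exact pow_le_pow_left₀ (abs_nonneg _) (by
          rw [abs_sub_comm] at h₁; linarith [abs_sub_le (γ k) (x k) (γ' k)]) 2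
    _ = Fintype.card ι * (2 * t) ^ 2 := by simp

end Boxes

section AbsAntitone

variable {D : EuclideanSpace ℝ ι → ℝ} {i : ι}

theorem abs_le_abs_zero_of_abs_antitone
    (hmono : ∀ x y : EuclideanSpace ℝ ι, |x i| ≤ |y i| → |D y| ≤ |D x|)
    (x : EuclideanSpace ℝ ι) : |D x| ≤ |D 0| :=
  hmono 0 x (by simp)

theorem abs_le_two_mul_abs_of_mem_towardZeroBox
    (hmono : ∀ x y : EuclideanSpace ℝ ι, |x i| ≤ |y i| → |D y| ≤ |D x|) {s t : ℝ}
    (hs : ∀ x : EuclideanSpace ℝ ι, |x i| ≤ s → |D 0| ≤ 2 * |D x|) (hts : t ≤ s)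
    {γ x : EuclideanSpace ℝ ι} (hx : x ∈ towardZeroBox t γ) :
    |D γ| ≤ 2 * |D x| := by
  have hxi := abs_le_max_of_mem_towardZeroIcc (hx i)
  rcases le_total t |γ i| with hγ | hγ
  · linarith [hmono x γ (hxi.trans_eq (max_eq_left hγ)), abs_nonneg (D x)]
  · linarith [abs_le_abs_zero_of_abs_antitone hmono γ,
      hs x ((hxi.trans_eq (max_eq_right hγ)).trans hts)]

variable [Fintype ι]

theorem integrableOn_abs_of_abs_antitone (hD : Continuous D)
    (hmono : ∀ x y : EuclideanSpace ℝ ι, |x i| ≤ |y i| → |D y| ≤ |D x|)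
    {S : Set (EuclideanSpace ℝ ι)} (hS : volume S ≠ ⊤) :
    IntegrableOn (fun x => |D x|) S :=
  Measure.integrableOn_of_bounded hS hD.abs.aestronglyMeasurable (M := |D 0|)
    (ae_of_all _ fun x => by simpa using abs_le_abs_zero_of_abs_antitone hmono x)

theorem exists_pos_abs_zero_le_two_mul_abs (hD : ContinuousAt D 0)
    (hmono : ∀ x y : EuclideanSpace ℝ ι, |x i| ≤ |y i| → |D y| ≤ |D x|) :
    ∃ s > 0, ∀ x : EuclideanSpace ℝ ι, |x i| ≤ s → |D 0| ≤ 2 * |D x| := by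
  classical
  by_cases h0 : D 0 = 0
  · exact ⟨1, one_pos, fun x _ => by simp [h0]⟩
  obtain ⟨ε, hε, hball⟩ := Metric.eventually_nhds_iff.1
    (hD.abs.eventually (lt_mem_nhds (half_lt_self (abs_pos.2 h0))))
  set p := EuclideanSpace.single i (ε / 2)
  have hp : |p i| = ε / 2 := by simp [p, (half_pos hε).le]
  have hDp : |D 0| / 2 < |D p| := hball (by simp [p, abs_of_pos hε, hε])
  refine ⟨ε / 2, by positivity, fun x hx => ?_⟩
  linarith [hmono x p (hp ▸ hx)]

theorem pow_mul_abs_le_two_mul_setIntegral_towardZeroBox (hD : Continuous D)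
    (hmono : ∀ x y : EuclideanSpace ℝ ι, |x i| ≤ |y i| → |D y| ≤ |D x|) {s t : ℝ}
    (hs : ∀ x : EuclideanSpace ℝ ι, |x i| ≤ s → |D 0| ≤ 2 * |D x|) (hts : t ≤ s)
    (ht : 0 ≤ t) (γ : EuclideanSpace ℝ ι) :
    t ^ Fintype.card ι * |D γ| ≤ 2 * ∫ x in towardZeroBox t γ, |D x| := by
  have h := setIntegral_ge_of_const_le_real (c := |D γ| / 2) (measurableSet_towardZeroBox t γ)
    (volume_towardZeroBox_ne_top t γ)
    (fun x hx => by linarith [abs_le_two_mul_abs_of_mem_towardZeroBox hmono hs hts hx])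
    (integrableOn_abs_of_abs_antitone hD hmono (volume_towardZeroBox_ne_top t γ))
  rw [measureReal_def, volume_towardZeroBox, ENNReal.toReal_pow, ENNReal.toReal_ofReal ht] at h
  linarith

theorem exists_sum_abs_le_mul_setIntegral_cube {r : ℝ} (hr : 0 < r) (hD : Continuous D)
    (hmono : ∀ x y : EuclideanSpace ℝ ι, |x i| ≤ |y i| → |D y| ≤ |D x|) :
    ∃ K : ℝ, 0 < K ∧ ∀ L : ℝ, r ≤ L → ∀ F : Finset (EuclideanSpace ℝ ι),
      (F : Set (EuclideanSpace ℝ ι)).Pairwise (fun γ γ' => r ≤ dist γ γ') →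
        (F : Set (EuclideanSpace ℝ ι)) ⊆ cube L →
        ∑ γ ∈ F, |D γ| ≤ K * ∫ x in cube L, |D x| := by
  obtain ⟨s, hs0, hs⟩ := exists_pos_abs_zero_le_two_mul_abs hD.continuousAt hmono
  set n : ℕ := Fintype.card ι
  -- `2 t (n + 1) ≤ r` forces `n (2 t)² < r²`, which keeps the boxes of `r`-separated points apart
  set t := min s (r / (2 * (n + 1)))
  have ht0 : 0 < t := lt_min hs0 (by positivity)
  have htr : 2 * t * (n + 1) ≤ r := by
    have := (le_div_iff₀ (by positivity)).1 (min_le_right s (r / (2 * (n + 1))))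
    linarith
  have hnt : n * (2 * t) ^ 2 < r ^ 2 :=
    calc n * (2 * t) ^ 2 < (n + 1) ^ 2 * (2 * t) ^ 2 := by gcongr; nlinarith
      _ = (2 * t * (n + 1)) ^ 2 := by ring
      _ ≤ r ^ 2 := pow_le_pow_left₀ (by positivity) htr 2
  refine ⟨2 / t ^ n, by positivity, fun L hL F hF hFL => ?_⟩
  have hdisj : (F : Set (EuclideanSpace ℝ ι)).Pairwise (Disjoint on towardZeroBox t) :=
    fun γ hγ γ' hγ' hne =>
      disjoint_towardZeroBox (hnt.trans_le (pow_le_pow_left₀ hr.le (hF hγ hγ' hne) 2))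
  have hsub : ∀ γ ∈ F, towardZeroBox t γ ⊆ cube L := fun γ hγ =>
    towardZeroBox_subset_cube (hFL hγ) (by nlinarith)
  have key : t ^ n * ∑ γ ∈ F, |D γ| ≤ 2 * ∫ x in cube L, |D x| :=
    calc t ^ n * ∑ γ ∈ F, |D γ| ≤ ∑ γ ∈ F, 2 * ∫ x in towardZeroBox t γ, |D x| := by
          rw [Finset.mul_sum]
          exact Finset.sum_le_sum fun γ _ => pow_mul_abs_le_two_mul_setIntegral_towardZeroBox
            hD hmono hs (min_le_left _ _) ht0.le γ
      _ = 2 * ∫ x in ⋃ γ ∈ F, towardZeroBox t γ, |D x| := by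
          rw [← Finset.mul_sum, integral_biUnion_finset F
            (fun γ _ => measurableSet_towardZeroBox t γ) hdisj
            fun γ _ => integrableOn_abs_of_abs_antitone hD hmono (volume_towardZeroBox_ne_top t γ)]
      _ ≤ 2 * ∫ x in cube L, |D x| := by
          refine mul_le_mul_of_nonneg_left ?_ two_pos.le
          exact setIntegral_mono_set
            (integrableOn_abs_of_abs_antitone hD hmono (volume_cube_ne_top L))
            (ae_of_all _ fun x => abs_nonneg _) (iUnion₂_subset hsub).eventuallyLE
  rw [div_mul_eq_mul_div, le_div_iff₀ (by positivity)]
  linarith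

end AbsAntitone

theorem UnifDiscrete.pairwise_le_dist {𝔇 : Set R2} {r : ℝ} (h : UnifDiscrete 𝔇 r) :
    𝔇.Pairwise (fun γ γ' => r ≤ dist γ γ') := by
  intro γ hγ γ' hγ' hne
  by_contra! hlt
  exact hne <|
    h.2 γ ⟨hγ, Metric.mem_ball_self h.1⟩ ⟨hγ', by rwa [Metric.mem_ball, dist_comm]⟩

theorem Lam_eq_cube (L : ℝ) : Lam L = cube L := by
  ext x
  simp [Lam, cube, Fin.forall_fin_two, abs_le]

/-- directional generalized Maclaurin–Cauchy test. For an `r`-uniformly discrete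
set `𝔇 ⊆ ℝ²` and a continuous function `D` monotone in the `i`-th coordinate, there is a
constant `K`, independent of `L`, such that for all `L > 2r` the sum of `|D(γ)|` over
`γ ∈ 𝔇 ∩ Λ_L` is bounded by `K ∫_{Λ_L} |D(x)| dx`. -/
theorem statement_6
    (𝔇 : Set R2) (r : ℝ) (h𝔇 : UnifDiscrete 𝔇 r) (i : Fin 2)
    (D : R2 → ℝ) (hD : Continuous D)
    (hmono : ∀ x y : R2, |x i| ≤ |y i| → |D y| ≤ |D x|) :
    ∃ K : ℝ, 0 < K ∧ ∀ L : ℝ, 2 * r < L →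
      ∀ F : Finset R2, (↑F ⊆ 𝔇 ∩ Lam L) →
        ∑ γ ∈ F, |D γ| ≤ K * ∫ x in Lam L, |D x| := by
  obtain ⟨K, hK, hsum⟩ := exists_sum_abs_le_mul_setIntegral_cube h𝔇.1 hD hmono
  refine ⟨K, hK, fun L hL F hF => ?_⟩
  rw [Lam_eq_cube] at hF ⊢
  exact hsum L (by linarith [h𝔇.1]) F (h𝔇.pairwise_le_dist.mono (hF.trans inter_subset_left))
    (hF.trans inter_subset_right)

end
end

section
/- Let 𝔇 ⊂ ℝ² be an r-uniformly discrete set, let s > 2, let m_* ∈ ℕ and K > 0, and let {w_{γ,a}}_{γ∈𝔇, 1≤a≤m(γ)} ⊂ L²(ℝ²) with m(γ) ≤ m_* be functions satisfying the pointwise bound |w_{γ,a}(x)| ≤ K ⟨x−γ⟩^{−s} for all x ∈ ℝ². Then for every 0 < ε < s − 2 there exists a constant k_s > 0 (depending on r, s, ε, K, m_*) such that for all γ, η ∈ 𝔇 and i ∈ {1,2}: ∑_{a=1}^{m(γ)} ∑_{b=1}^{m(η)} |⟨w_{γ,a}, (X_i − γ_i) w_{η,b}⟩| ≤ k_s ⟨γ−η⟩^{−(s−2−ε)},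 where ⟨w, (X_i − γ_i) v⟩ = ∫_{ℝ²} conj(w(x)) (x_i − γ_i) v(x) dx. -/
open MeasureTheory Filter Topology

noncomputable section

/-!
The integrand is bounded by `K² ⟨x-γ⟩^{1-s} ⟨x-η⟩^{-s}`, the factor `|x_i - γ_i| ≤ ⟨x-γ⟩`
costing one power of the first bracket. Splitting `⟨x-η⟩^{-s} = ⟨x-η⟩^{-t} ⟨x-η⟩^{-(2+ε)}` with
`t = s-2-ε`, Peetre's inequality `⟨γ-η⟩ ≤ √2 ⟨x-γ⟩⟨x-η⟩` turns `⟨x-γ⟩^{-t} ⟨x-η⟩^{-t}` into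
`2^{t/2} ⟨γ-η⟩^{-t}`, and what is left, `⟨x-η⟩^{-(2+ε)}`, is integrable over `ℝ²`. Summing over
at most `m_*²` pairs `(a, b)` gives the bound.
-/

lemma one_le_jap (x : R2) : 1 ≤ jap x :=
  Real.one_le_sqrt.mpr (le_add_of_nonneg_right (sq_nonneg _))

lemma jap_pos (x : R2) : 0 < jap x := one_pos.trans_le (one_le_jap x)

lemma rpow_jap_nonneg (x : R2) (p : ℝ) : 0 ≤ jap x ^ p := Real.rpow_nonneg (jap_pos x).le p

lemma norm_le_jap (x : R2) : ‖x‖ ≤ jap x :=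
  Real.le_sqrt_of_sq_le (le_add_of_nonneg_left zero_le_one)

lemma abs_apply_le_jap (x : R2) (i : Fin 2) : |x i| ≤ jap x :=
  (PiLp.norm_apply_le x i).trans (norm_le_jap x)

lemma jap_sub_le (a b : R2) : jap (a - b) ≤ √2 * (jap a * jap b) := by
  rw [jap, jap, jap, ← Real.sqrt_mul (by positivity), ← Real.sqrt_mul zero_le_two]
  refine Real.sqrt_le_sqrt ?_
  have hab := norm_sub_le a b
  nlinarith [norm_nonneg (a - b), norm_nonneg a, norm_nonneg b, sq_nonneg (‖a‖ - ‖b‖),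
    mul_nonneg (sq_nonneg ‖a‖) (sq_nonneg ‖b‖)]

lemma rpow_neg_jap_mul_le {t : ℝ} (ht : 0 ≤ t) (a b : R2) :
    jap a ^ (-t) * jap b ^ (-t) ≤ √2 ^ t * jap (a - b) ^ (-t) := by
  have hsqrt : (0 : ℝ) < √2 := by positivity
  rw [← Real.mul_rpow (jap_pos a).le (jap_pos b).le]
  calc (jap a * jap b) ^ (-t) ≤ (jap (a - b) / √2) ^ (-t) :=
        Real.rpow_le_rpow_of_nonpos (div_pos (jap_pos _) hsqrt)
          ((div_le_iff₀' hsqrt).mpr (jap_sub_le a b)) (neg_nonpos.mpr ht)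
    _ = √2 ^ t * jap (a - b) ^ (-t) := by
        rw [Real.div_rpow (jap_pos _).le hsqrt.le, Real.rpow_neg hsqrt.le, div_inv_eq_mul,
          mul_comm]

lemma rpow_neg_jap_mul_rpow_neg_jap_le {t : ℝ} (ht : 0 ≤ t) (u : ℝ) (x γ η : R2) :
    jap (x - γ) ^ (-t) * jap (x - η) ^ (-(t + u))
      ≤ √2 ^ t * jap (γ - η) ^ (-t) * jap (x - η) ^ (-u) := by
  rw [neg_add, Real.rpow_add (jap_pos _), ← mul_assoc, mul_comm (jap (x - γ) ^ (-t))]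
  have h := rpow_neg_jap_mul_le ht (x - η) (x - γ)
  rw [sub_sub_sub_cancel_left] at h
  exact mul_le_mul_of_nonneg_right h (rpow_jap_nonneg _ _)

lemma integrable_rpow_neg_jap {u : ℝ} (hu : 2 < u) :
    Integrable (fun x : R2 => jap x ^ (-u)) := by
  have hdim : (Module.finrank ℝ R2 : ℝ) < u := by simpa using hu
  refine (integrable_rpow_neg_one_add_norm_sq hdim).congr (.of_forall fun x => ?_)
  dsimp only
  rw [jap, Real.sqrt_eq_rpow, ← Real.rpow_mul (by positivity)]
  ring_nf

section

variable {f g : R2 → ℂ} {γ η : R2} {K s t u : ℝ}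

lemma norm_conj_mul_coord_mul_le (ht : 0 ≤ t) (hu : 1 ≤ u) (hs : t + u = s)
    (hf : ∀ x, ‖f x‖ ≤ K * jap (x - γ) ^ (-s)) (hg : ∀ x, ‖g x‖ ≤ K * jap (x - η) ^ (-s))
    (i : Fin 2) (x : R2) :
    ‖starRingEnd ℂ (f x) * ((x i - γ i : ℝ) : ℂ) * g x‖
      ≤ K ^ 2 * √2 ^ t * jap (γ - η) ^ (-t) * jap (x - η) ^ (-u) := by
  have hfK := (norm_nonneg _).trans (hf x)
  have hcoord : ‖((x i - γ i : ℝ) : ℂ)‖ ≤ jap (x - γ) := by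
    rw [Complex.norm_real, Real.norm_eq_abs]
    exact abs_apply_le_jap (x - γ) i
  calc ‖starRingEnd ℂ (f x) * ((x i - γ i : ℝ) : ℂ) * g x‖
      ≤ K * jap (x - γ) ^ (-s) * jap (x - γ) * (K * jap (x - η) ^ (-s)) := by
        rw [norm_mul, norm_mul, RCLike.norm_conj]
        exact mul_le_mul (mul_le_mul (hf x) hcoord (norm_nonneg _) hfK) (hg x) (norm_nonneg _)
          (mul_nonneg hfK (jap_pos _).le)
    _ = K ^ 2 * (jap (x - γ) ^ (-s + 1) * jap (x - η) ^ (-(t + u))) := by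
        rw [Real.rpow_add_one (jap_pos _).ne', hs]
        ring
    _ ≤ K ^ 2 * (jap (x - γ) ^ (-t) * jap (x - η) ^ (-(t + u))) := by
        have hexp := Real.rpow_le_rpow_of_exponent_le (one_le_jap (x - γ))
          (by linarith : -s + 1 ≤ -t)
        exact mul_le_mul_of_nonneg_left (mul_le_mul_of_nonneg_right hexp (rpow_jap_nonneg _ _))
          (sq_nonneg K)
    _ ≤ K ^ 2 * (√2 ^ t * jap (γ - η) ^ (-t) * jap (x - η) ^ (-u)) :=
        mul_le_mul_of_nonneg_left (rpow_neg_jap_mul_rpow_neg_jap_le ht u x γ η) (sq_nonneg K)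
    _ = K ^ 2 * √2 ^ t * jap (γ - η) ^ (-t) * jap (x - η) ^ (-u) := by ring

lemma norm_integral_conj_mul_coord_mul_le (ht : 0 ≤ t) (hu : 2 < u) (hs : t + u = s)
    (hf : ∀ x, ‖f x‖ ≤ K * jap (x - γ) ^ (-s)) (hg : ∀ x, ‖g x‖ ≤ K * jap (x - η) ^ (-s))
    (i : Fin 2) :
    ‖∫ x : R2, starRingEnd ℂ (f x) * ((x i - γ i : ℝ) : ℂ) * g x‖
      ≤ K ^ 2 * √2 ^ t * (∫ x : R2, jap x ^ (-u)) * jap (γ - η) ^ (-t) := by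
  calc ‖∫ x : R2, starRingEnd ℂ (f x) * ((x i - γ i : ℝ) : ℂ) * g x‖
      ≤ ∫ x : R2, K ^ 2 * √2 ^ t * jap (γ - η) ^ (-t) * jap (x - η) ^ (-u) :=
        norm_integral_le_of_norm_le (((integrable_rpow_neg_jap hu).comp_sub_right η).const_mul _)
          (.of_forall (norm_conj_mul_coord_mul_le ht (by linarith) hs hf hg i))
    _ = K ^ 2 * √2 ^ t * (∫ x : R2, jap x ^ (-u)) * jap (γ - η) ^ (-t) := by
        rw [integral_const_mul, integral_sub_right_eq_self (fun x : R2 => jap x ^ (-u)) η]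
        ring

end

theorem statement_12_general
    (𝔇 : Set R2)
    (s : ℝ) (mStar : ℕ) (K : ℝ)
    (m : R2 → ℕ) (hm : ∀ γ ∈ 𝔇, m γ ≤ mStar)
    (w : R2 → ℕ → R2 → ℂ)
    (hptw : ∀ γ ∈ 𝔇, ∀ a < m γ, ∀ x : R2,
      ‖w γ a x‖ ≤ K * jap (x - γ) ^ (-s))
    (ε : ℝ) (hε0 : 0 < ε) (hεs : ε < s - 2) :
    ∃ k : ℝ, 0 < k ∧ ∀ γ ∈ 𝔇, ∀ η ∈ 𝔇, ∀ i : Fin 2,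
      ∑ a ∈ Finset.range (m γ), ∑ b ∈ Finset.range (m η),
          ‖∫ x : R2,
            (starRingEnd ℂ) (w γ a x) * ((x i - γ i : ℝ) : ℂ) * w η b x‖
        ≤ k * jap (γ - η) ^ (-(s - 2 - ε)) := by
  obtain ⟨C, hC, hCdef⟩ : ∃ C : ℝ, 0 ≤ C ∧
      C = K ^ 2 * √2 ^ (s - 2 - ε) * ∫ x : R2, jap x ^ (-(2 + ε)) := by
    have : 0 ≤ ∫ x : R2, jap x ^ (-(2 + ε)) :=
      integral_nonneg fun x => rpow_jap_nonneg x _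
    exact ⟨_, by positivity, rfl⟩
  refine ⟨mStar ^ 2 * C + 1, by positivity, fun γ hγ η hη i => ?_⟩
  have hdecay := rpow_jap_nonneg (γ - η) (-(s - 2 - ε))
  have hγm : (m γ : ℝ) ≤ mStar := by exact_mod_cast hm γ hγ
  have hηm : (m η : ℝ) ≤ mStar := by exact_mod_cast hm η hη
  calc _ ≤ ∑ a ∈ Finset.range (m γ), ∑ b ∈ Finset.range (m η), C * jap (γ - η) ^ (-(s - 2 - ε)) :=
        Finset.sum_le_sum fun a ha => Finset.sum_le_sum fun b hb =>
          hCdef ▸ norm_integral_conj_mul_coord_mul_le (by linarith) (by linarith) (by ring)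
            (hptw γ hγ a (Finset.mem_range.mp ha)) (hptw η hη b (Finset.mem_range.mp hb)) i
    _ = m γ * m η * (C * jap (γ - η) ^ (-(s - 2 - ε))) := by simp [mul_assoc]
    _ ≤ mStar * mStar * (C * jap (γ - η) ^ (-(s - 2 - ε))) := by gcongr
    _ ≤ (mStar ^ 2 * C + 1) * jap (γ - η) ^ (-(s - 2 - ε)) := by nlinarith

/-- off-diagonal matrix element bound. For functions `w_{γ,a}` in `L²(ℝ²)` with
`|w_{γ,a}(x)| ≤ K ⟨x-γ⟩^{-s}`, `s > 2`, and multiplicities bounded by `m_*`, for every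
`0 < ε < s-2` there is `k_s > 0` such that
`∑_{a,b} |⟨w_{γ,a}, (X_i - γ_i) w_{η,b}⟩| ≤ k_s ⟨γ-η⟩^{-(s-2-ε)}` for all `γ, η ∈ 𝔇`. -/
theorem statement_12
    (𝔇 : Set R2) (r : ℝ) (h𝔇 : UnifDiscrete 𝔇 r)
    (s : ℝ) (hs : 2 < s) (mStar : ℕ) (K : ℝ) (hK : 0 < K)
    (m : R2 → ℕ) (hm : ∀ γ ∈ 𝔇, m γ ≤ mStar)
    (w : R2 → ℕ → R2 → ℂ)
    (hL2 : ∀ γ ∈ 𝔇, ∀ a < m γ, MeasureTheory.MemLp (w γ a) 2 volume)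
    (hptw : ∀ γ ∈ 𝔇, ∀ a < m γ, ∀ x : R2,
      ‖w γ a x‖ ≤ K * jap (x - γ) ^ (-s))
    (ε : ℝ) (hε0 : 0 < ε) (hεs : ε < s - 2) :
    ∃ k : ℝ, 0 < k ∧ ∀ γ ∈ 𝔇, ∀ η ∈ 𝔇, ∀ i : Fin 2,
      ∑ a ∈ Finset.range (m γ), ∑ b ∈ Finset.range (m η),
          ‖∫ x : R2,
            (starRingEnd ℂ) (w γ a x) * ((x i - γ i : ℝ) : ℂ) * w η b x‖
        ≤ k * jap (γ - η) ^ (-(s - 2 - ε)) :=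
  statement_12_general 𝔇 s mStar K m hm w hptw ε hε0 hεs

end
end

section
/- Let 𝔇 ⊂ ℝ² be an r-uniformly discrete set, let α > 0 and 0 < β' < α. Then there exists a constant C > 0 (depending on r, α, β') such that for all x, y ∈ ℝ²: ∑_{γ ∈ 𝔇} e^{−α‖x−γ‖} e^{−α‖y−γ‖} ≤ C e^{−β'‖x−y‖}. -/
open MeasureTheory Filter Topology

noncomputable section

/- Since `‖x - y‖ ≤ ‖x - γ‖ + ‖y - γ‖`, each term of the sum is at most
`e^{-β'‖x-y‖} e^{-(α-β')‖x-γ‖}`, so it suffices to bound `∑_{γ∈𝔇} e^{-ε‖x-γ‖}` uniformly in `x`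
for `ε = α - β'`. For this, sort the points `x - γ` into the cells of the square grid of mesh `r/2`:
each cell holds at most one of them, and the term of `γ` is at most a constant times
`e^{-εr(|k₁|+|k₂|)/4}`, where `(k₁, k₂) ∈ ℤ²` labels the cell of `x - γ`. -/

lemma summable_exp_abs_int_mul {c : ℝ} (hc : c < 0) :
    Summable fun k : ℤ => Real.exp (|(k : ℝ)| * c) := by
  apply Summable.of_nat_of_neg <;>
    simpa [abs_of_nonneg] using Real.summable_exp_nat_mul_iff.mpr hc

lemma norm_le_abs_add_abs (v : R2) : ‖v‖ ≤ |v 0| + |v 1| := by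
  rw [EuclideanSpace.norm_eq, Fin.sum_univ_two, Real.norm_eq_abs, Real.norm_eq_abs, sq_abs,
    sq_abs, Real.sqrt_le_left (by positivity)]
  nlinarith [abs_nonneg (v 0), abs_nonneg (v 1), sq_abs (v 0), sq_abs (v 1)]

lemma abs_add_abs_le_two_mul_norm (v : R2) : |v 0| + |v 1| ≤ 2 * ‖v‖ := by
  have h₀ := PiLp.norm_apply_le v 0
  have h₁ := PiLp.norm_apply_le v 1
  rw [Real.norm_eq_abs] at h₀ h₁
  linarith

lemma abs_floor_div_mul_le {s : ℝ} (hs : 0 < s) (t : ℝ) : |(⌊t / s⌋ : ℝ)| * s ≤ |t| + s := by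
  have hfract : |t / s - ⌊t / s⌋| ≤ 1 := by
    rw [abs_le]
    constructor <;> linarith [Int.floor_le (t / s), Int.lt_floor_add_one (t / s)]
  have hk : |(⌊t / s⌋ : ℝ)| ≤ |t| / s + 1 := by
    rw [← abs_of_pos hs, ← abs_div, abs_of_pos hs]
    linarith [abs_sub_abs_le_abs_sub (⌊t / s⌋ : ℝ) (t / s), abs_sub_comm (⌊t / s⌋ : ℝ) (t / s)]
  calc |(⌊t / s⌋ : ℝ)| * s ≤ (|t| / s + 1) * s := by gcongr
    _ = |t| + s := by field_simp

lemma abs_sub_lt_of_floor_div_eq {s a b : ℝ} (hs : 0 < s) (h : ⌊a / s⌋ = ⌊b / s⌋) :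
    |a - b| < s := by
  have h₁ := Int.abs_sub_lt_one_of_floor_eq_floor h
  rwa [← sub_div, abs_div, abs_of_pos hs, div_lt_one hs] at h₁

def gridCell (s : ℝ) (v : R2) : ℤ × ℤ := (⌊v 0 / s⌋, ⌊v 1 / s⌋)

lemma norm_sub_lt_of_gridCell_eq {s : ℝ} (hs : 0 < s) {v w : R2}
    (h : gridCell s v = gridCell s w) : ‖v - w‖ < 2 * s := by
  have h₀ := abs_sub_lt_of_floor_div_eq hs (congrArg Prod.fst h)
  have h₁ := abs_sub_lt_of_floor_div_eq hs (congrArg Prod.snd h)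
  have := norm_le_abs_add_abs (v - w)
  simp only [PiLp.sub_apply] at this
  linarith

lemma UnifDiscrete.injective_gridCell {𝔇 : Set R2} {r : ℝ} (h𝔇 : UnifDiscrete 𝔇 r) (x : R2) :
    Function.Injective fun γ : 𝔇 => gridCell (r / 2) (x - γ) := by
  intro γ γ' h
  have hdist : dist (γ' : R2) γ < r := by
    have := norm_sub_lt_of_gridCell_eq (half_pos h𝔇.1) h
    rwa [sub_sub_sub_cancel_left, mul_div_cancel₀ r two_ne_zero, ← dist_eq_norm] at this
  exact Subtype.ext <| h𝔇.2 γ ⟨γ.2, Metric.mem_ball_self h𝔇.1⟩ ⟨γ'.2, hdist⟩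

def gridWeight (a : ℝ) (p : ℤ × ℤ) : ℝ := Real.exp (-a * (|(p.1 : ℝ)| + |(p.2 : ℝ)|))

lemma summable_gridWeight {a : ℝ} (ha : 0 < a) : Summable (gridWeight a) := by
  have h := summable_exp_abs_int_mul (neg_lt_zero.mpr ha)
  refine (h.mul_of_nonneg h (fun _ => (Real.exp_pos _).le) fun _ => (Real.exp_pos _).le).congr
    fun p => ?_
  rw [gridWeight, ← Real.exp_add]
  ring_nf

lemma exp_neg_mul_norm_le_gridWeight {ε s : ℝ} (hε : 0 ≤ ε) (hs : 0 < s) (v : R2) :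
    Real.exp (-ε * ‖v‖) ≤ Real.exp (ε * s) * gridWeight (ε * s / 2) (gridCell s v) := by
  rw [gridWeight, ← Real.exp_add, Real.exp_le_exp]
  have h₀ := abs_floor_div_mul_le hs (v 0)
  have h₁ := abs_floor_div_mul_le hs (v 1)
  have hv := abs_add_abs_le_two_mul_norm v
  simp only [gridCell]
  nlinarith

theorem UnifDiscrete.exists_tsum_exp_neg_mul_norm_sub_le {𝔇 : Set R2} {r : ℝ}
    (h𝔇 : UnifDiscrete 𝔇 r) {ε : ℝ} (hε : 0 < ε) :
    ∃ C : ℝ, 0 < C ∧ ∀ x : R2,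
      Summable (fun γ : 𝔇 => Real.exp (-ε * ‖x - (γ : R2)‖)) ∧
      ∑' γ : 𝔇, Real.exp (-ε * ‖x - (γ : R2)‖) ≤ C := by
  have hs : 0 < r / 2 := half_pos h𝔇.1
  set g : ℤ × ℤ → ℝ := fun p => Real.exp (ε * (r / 2)) * gridWeight (ε * (r / 2) / 2) p
  have hg : Summable g := (summable_gridWeight (by positivity)).mul_left _
  have hg_pos : ∀ p, 0 < g p := fun p => by simp only [g, gridWeight]; positivity
  refine ⟨∑' p, g p, hg.tsum_pos (fun p => (hg_pos p).le) 0 (hg_pos 0), fun x => ?_⟩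
  have hle : ∀ γ : 𝔇, Real.exp (-ε * ‖x - (γ : R2)‖) ≤ g (gridCell (r / 2) (x - γ)) :=
    fun γ => exp_neg_mul_norm_le_gridWeight hε.le hs _
  have hinj := h𝔇.injective_gridCell x
  have hsum := (hg.comp_injective hinj).of_nonneg_of_le (fun _ => (Real.exp_pos _).le) hle
  exact ⟨hsum, (hsum.tsum_le_tsum hle (hg.comp_injective hinj)).trans
    (tsum_comp_le_tsum_of_inj hg (fun p => (hg_pos p).le) hinj)⟩

lemma exp_neg_mul_mul_exp_neg_mul_le_of_le_add {α β' a b d : ℝ} (hβ' : 0 ≤ β') (hαβ' : β' ≤ α)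
    (hb : 0 ≤ b) (hd : d ≤ a + b) :
    Real.exp (-α * a) * Real.exp (-α * b) ≤ Real.exp (-β' * d) * Real.exp (-(α - β') * a) := by
  rw [← Real.exp_add, ← Real.exp_add, Real.exp_le_exp]
  nlinarith [mul_le_mul_of_nonneg_left hd hβ', mul_nonneg (sub_nonneg.mpr hαβ') hb]

theorem statement_16_general
    (𝔇 : Set R2) (r : ℝ) (h𝔇 : UnifDiscrete 𝔇 r)
    (α β' : ℝ) (hβ'0 : 0 < β') (hβ' : β' < α) :
    ∃ C : ℝ, 0 < C ∧ ∀ x y : R2,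
      Summable (fun γ : 𝔇 =>
        Real.exp (-α * ‖x - (γ : R2)‖) * Real.exp (-α * ‖y - (γ : R2)‖)) ∧
      ∑' γ : 𝔇, Real.exp (-α * ‖x - (γ : R2)‖) * Real.exp (-α * ‖y - (γ : R2)‖)
        ≤ C * Real.exp (-β' * ‖x - y‖) := by
  obtain ⟨C, hC, hbound⟩ := h𝔇.exists_tsum_exp_neg_mul_norm_sub_le (sub_pos.mpr hβ')
  refine ⟨C, hC, fun x y => ?_⟩
  obtain ⟨hsum, hle⟩ := hbound x
  have hterm : ∀ γ : 𝔇, Real.exp (-α * ‖x - (γ : R2)‖) * Real.exp (-α * ‖y - (γ : R2)‖)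
      ≤ Real.exp (-β' * ‖x - y‖) * Real.exp (-(α - β') * ‖x - (γ : R2)‖) :=
    fun γ => exp_neg_mul_mul_exp_neg_mul_le_of_le_add hβ'0.le hβ'.le (norm_nonneg _) <| by
      simpa only [dist_eq_norm] using dist_triangle_right x y (γ : R2)
  have hsum' := (hsum.mul_left _).of_nonneg_of_le (fun _ => by positivity) hterm
  refine ⟨hsum', ?_⟩
  calc ∑' γ : 𝔇, Real.exp (-α * ‖x - (γ : R2)‖) * Real.exp (-α * ‖y - (γ : R2)‖)
      ≤ ∑' γ : 𝔇, Real.exp (-β' * ‖x - y‖) * Real.exp (-(α - β') * ‖x - (γ : R2)‖) :=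
        hsum'.tsum_le_tsum hterm (hsum.mul_left _)
    _ = Real.exp (-β' * ‖x - y‖) * ∑' γ : 𝔇, Real.exp (-(α - β') * ‖x - (γ : R2)‖) :=
        tsum_mul_left
    _ ≤ C * Real.exp (-β' * ‖x - y‖) := by
        rw [mul_comm C]
        exact mul_le_mul_of_nonneg_left hle (Real.exp_pos _).le

/-- for an `r`-uniformly discrete set `𝔇 ⊆ ℝ²`, `α > 0` and `0 < β' < α`, there
is `C > 0` with `∑_{γ∈𝔇} e^{-α‖x-γ‖} e^{-α‖y-γ‖} ≤ C e^{-β'‖x-y‖}` for all `x, y ∈ ℝ²`. -/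
theorem statement_16
    (𝔇 : Set R2) (r : ℝ) (h𝔇 : UnifDiscrete 𝔇 r)
    (α β' : ℝ) (hα : 0 < α) (hβ'0 : 0 < β') (hβ' : β' < α) :
    ∃ C : ℝ, 0 < C ∧ ∀ x y : R2,
      Summable (fun γ : 𝔇 =>
        Real.exp (-α * ‖x - (γ : R2)‖) * Real.exp (-α * ‖y - (γ : R2)‖)) ∧
      ∑' γ : 𝔇, Real.exp (-α * ‖x - (γ : R2)‖) * Real.exp (-α * ‖y - (γ : R2)‖)
        ≤ C * Real.exp (-β' * ‖x - y‖) :=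
  statement_16_general 𝔇 r h𝔇 α β' hβ'0 hβ'

end
end
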